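/- arXiv:2002.02122 — 3 statements merged into one kernel-verified Lean document; each statement's English description precedes it below -/
import Mathlib

section
/- Let k be an algebraically closed field of characteristic 2, let r, s ∈ k with r ≠ 0 and s^2 + s = r^5, and set b = (r^5 + 1)/r. Then the map α: (x,y) ↦ (x + r^2, y + r x^2 + r^3 x + s) is an involution of the curve C_b: y^2 + y = x^5 + b x^3, the functions u = x^2 + r^2 x and v = y + (x/r^2)(r x^2 + r^3 x + s) are invariant under α, and they satisfy v^2 + v = u^3/r^2 + (s/r^4)·u. -/
/-!
In characteristic 2 the Artin–Schreier map `℘ y = y² + y` is additive. Write `f = curveRhs b`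
and `t = yShift r s`, so that `C_b : ℘ y = f x` and `α (x, y) = (x + r², y + t x)`.
The relations `s² + s = r⁵` and `rb = r⁵ + 1` are exactly what makes
`f (x + r²) = f x + ℘ (t x)`, so `α` preserves `C_b`; `t (x + r²) = t x` gives the invariance
of `v = y + x t(x) / r²`; and `℘ v = ℘ y + ℘ (x t(x) / r²) = f x + ℘ (x t(x) / r²)` equals
`u³/r² + su/r⁴` by direct computation.
-/

section CharTwo

variable {R : Type*} [CommRing R] [CharP R 2]

def artinSchreier (y : R) : R := y ^ 2 + y

lemma artinSchreier_add (a b : R) :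
    artinSchreier (a + b) = artinSchreier a + artinSchreier b := by
  unfold artinSchreier
  grind

def curveRhs (b x : R) : R := x ^ 5 + b * x ^ 3

def yShift (r s x : R) : R := r * x ^ 2 + r ^ 3 * x + s

lemma yShift_add_sq (r s x : R) : yShift r s (x + r ^ 2) = yShift r s x := by
  unfold yShift
  grind

lemma curveRhs_add_sq {r s b : R} (hs : s ^ 2 + s = r ^ 5) (hb : r * b = r ^ 5 + 1) (x : R) :
    curveRhs b (x + r ^ 2) = curveRhs b x + artinSchreier (yShift r s x) := by
  unfold curveRhs artinSchreier yShift
  grind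

end CharTwo

lemma curveRhs_add_artinSchreier {K : Type*} [Field K] [CharP K 2] {r s b : K} (hr : r ≠ 0)
    (hs : s ^ 2 + s = r ^ 5) (hb : r * b = r ^ 5 + 1) (x : K) :
    curveRhs b x + artinSchreier (x / r ^ 2 * yShift r s x)
      = (x ^ 2 + r ^ 2 * x) ^ 3 / r ^ 2 + s / r ^ 4 * (x ^ 2 + r ^ 2 * x) := by
  unfold curveRhs artinSchreier yShift
  field_simp
  grind

theorem stmt_5_general (k : Type*) [Field k] [CharP k 2]
    (r s : k) (hr : r ≠ 0) (hs : s ^ 2 + s = r ^ 5) (b : k) (hb : b = (r ^ 5 + 1) / r) :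
    ∀ x y : k, y ^ 2 + y = x ^ 5 + b * x ^ 3 →
      -- α maps points of C_b to points of C_b:
      ((y + r * x ^ 2 + r ^ 3 * x + s) ^ 2 + (y + r * x ^ 2 + r ^ 3 * x + s)
          = (x + r ^ 2) ^ 5 + b * (x + r ^ 2) ^ 3) ∧
      -- α is an involution:
      ((x + r ^ 2) + r ^ 2 = x ∧
        (y + r * x ^ 2 + r ^ 3 * x + s)
            + r * (x + r ^ 2) ^ 2 + r ^ 3 * (x + r ^ 2) + s = y) ∧
      -- u is invariant under α:
      ((x + r ^ 2) ^ 2 + r ^ 2 * (x + r ^ 2) = x ^ 2 + r ^ 2 * x) ∧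
      -- v is invariant under α:
      ((y + r * x ^ 2 + r ^ 3 * x + s)
          + ((x + r ^ 2) / r ^ 2) * (r * (x + r ^ 2) ^ 2 + r ^ 3 * (x + r ^ 2) + s)
        = y + (x / r ^ 2) * (r * x ^ 2 + r ^ 3 * x + s)) ∧
      -- v² + v = u³/r² + (s/r⁴)u:
      ((y + (x / r ^ 2) * (r * x ^ 2 + r ^ 3 * x + s)) ^ 2
          + (y + (x / r ^ 2) * (r * x ^ 2 + r ^ 3 * x + s))
        = (x ^ 2 + r ^ 2 * x) ^ 3 / r ^ 2 + (s / r ^ 4) * (x ^ 2 + r ^ 2 * x)) := by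
  intro x y hC
  have hC : artinSchreier y = curveRhs b x := hC
  have hb : r * b = r ^ 5 + 1 := by rw [hb]; field_simp
  have ht : yShift r s (x + r ^ 2) = yShift r s x := yShift_add_sq r s x
  unfold yShift at ht
  refine ⟨?_, ⟨CharTwo.add_cancel_right x (r ^ 2), by grind⟩, by grind, ?_, ?_⟩
  · calc _ = artinSchreier (y + yShift r s x) := by unfold artinSchreier yShift; ring
      _ = curveRhs b (x + r ^ 2) := by rw [artinSchreier_add, hC, curveRhs_add_sq hs hb]
  · rw [ht]
    field_simp
    grind
  · calc _ = artinSchreier (y + x / r ^ 2 * yShift r s x) := rfl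
      _ = _ := by rw [artinSchreier_add, hC, curveRhs_add_artinSchreier hr hs hb]

/-- Let `k` be algebraically closed of characteristic 2, `r, s ∈ k` with `r ≠ 0` and
`s² + s = r⁵`, and `b = (r⁵+1)/r`.  The map `α : (x,y) ↦ (x + r², y + rx² + r³x + s)`
is an involution of the curve `C_b : y² + y = x⁵ + bx³`, the functions
`u = x² + r²x` and `v = y + (x/r²)(rx² + r³x + s)` are invariant under `α`, and
`v² + v = u³/r² + (s/r⁴)u`. -/
theorem stmt_5 (k : Type*) [Field k] [IsAlgClosed k] [CharP k 2]
    (r s : k) (hr : r ≠ 0) (hs : s ^ 2 + s = r ^ 5) (b : k) (hb : b = (r ^ 5 + 1) / r) :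
    ∀ x y : k, y ^ 2 + y = x ^ 5 + b * x ^ 3 →
      -- α maps points of C_b to points of C_b:
      ((y + r * x ^ 2 + r ^ 3 * x + s) ^ 2 + (y + r * x ^ 2 + r ^ 3 * x + s)
          = (x + r ^ 2) ^ 5 + b * (x + r ^ 2) ^ 3) ∧
      -- α is an involution:
      ((x + r ^ 2) + r ^ 2 = x ∧
        (y + r * x ^ 2 + r ^ 3 * x + s)
            + r * (x + r ^ 2) ^ 2 + r ^ 3 * (x + r ^ 2) + s = y) ∧
      -- u is invariant under α:
      ((x + r ^ 2) ^ 2 + r ^ 2 * (x + r ^ 2) = x ^ 2 + r ^ 2 * x) ∧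
      -- v is invariant under α:
      ((y + r * x ^ 2 + r ^ 3 * x + s)
          + ((x + r ^ 2) / r ^ 2) * (r * (x + r ^ 2) ^ 2 + r ^ 3 * (x + r ^ 2) + s)
        = y + (x / r ^ 2) * (r * x ^ 2 + r ^ 3 * x + s)) ∧
      -- v² + v = u³/r² + (s/r⁴)u:
      ((y + (x / r ^ 2) * (r * x ^ 2 + r ^ 3 * x + s)) ^ 2
          + (y + (x / r ^ 2) * (r * x ^ 2 + r ^ 3 * x + s))
        = (x ^ 2 + r ^ 2 * x) ^ 3 / r ^ 2 + (s / r ^ 4) * (x ^ 2 + r ^ 2 * x)) :=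
  stmt_5_general k r s hr hs b hb
end

section
/- Let k be a field of characteristic 2. For a polynomial S = s_{10} t^{10} + s_9 t^9 + ⋯ + s_1 t + s_0 in k[t] of degree at most 10, there exists T ∈ k[t] with S = T^2 + T if and only if k contains a root of X^2 + X + s_0 and the following hold: s_9 = 0, s_7 = 0, s_{10} + s_5^2 = 0, s_6 + s_3^2 = 0, and s_8 + s_4^2 + s_2^4 + s_1^8 = 0. -/
/-!
In characteristic 2 squaring is additive, so for `T = ∑ tᵢ Xⁱ` we get
`T² + T = ∑ tᵢ² X²ⁱ + ∑ tᵢ Xⁱ`. Since `deg (T² + T) = 2 deg T`, a solution of `S = T² + T`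
has degree at most 5, and comparing the eleven coefficients expresses `s₀, …, s₁₀` through
`t₀, …, t₅`. Eliminating the `tᵢ` gives exactly the stated conditions; conversely, if
`z² + z = s₀` they make `T = z + s₁ X + (s₂ + s₁²) X² + s₃ X³ + (s₄ + s₂² + s₁⁴) X⁴ + s₅ X⁵`
a solution.
-/

open Polynomial

section FinCoeffs

variable {R : Type*} [Semiring R] {n : ℕ}

theorem coeff_sum_fin_C_mul_X_pow (a : Fin n → R) (i : Fin n) :
    (∑ j : Fin n, C (a j) * X ^ (j : ℕ)).coeff i = a i := by
  simp [Fin.val_inj]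

theorem sum_fin_C_mul_X_pow_inj {a b : Fin n → R} :
    ∑ j : Fin n, C (a j) * X ^ (j : ℕ) = ∑ j : Fin n, C (b j) * X ^ (j : ℕ) ↔ a = b := by
  refine ⟨fun h ↦ funext fun i ↦ ?_, fun h ↦ h ▸ rfl⟩
  rw [← coeff_sum_fin_C_mul_X_pow a, h, coeff_sum_fin_C_mul_X_pow]

theorem sum_fin_C_coeff_mul_X_pow {p : R[X]} (hp : p.degree < n) :
    ∑ i : Fin n, C (p.coeff i) * X ^ (i : ℕ) = p := by
  rw [sum_fin (fun i a ↦ C a * X ^ i) (by simp) hp, sum_C_mul_X_pow_eq]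

end FinCoeffs

theorem natDegree_sq_add_self {R : Type*} [CommRing R] [NoZeroDivisors R] (p : R[X]) :
    (p ^ 2 + p).natDegree = 2 * p.natDegree := by
  rcases Nat.eq_zero_or_pos p.natDegree with hp | hp
  · rw [eq_C_of_natDegree_eq_zero hp, ← C_pow, ← C_add, natDegree_C, natDegree_C]
  · have hsq : (p ^ 2).natDegree = 2 * p.natDegree := natDegree_pow p 2
    rw [natDegree_add_eq_left_of_natDegree_lt (by omega), hsq]

def sqAddSelfCoeffs {R : Type*} [Semiring R] (t : Fin 6 → R) : Fin 11 → R :=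
  ![t 0 ^ 2 + t 0, t 1, t 1 ^ 2 + t 2, t 3, t 2 ^ 2 + t 4, t 5, t 3 ^ 2, 0, t 4 ^ 2, 0, t 5 ^ 2]

section CharTwo

variable {R : Type*} [CommRing R] [CharP R 2]

theorem sq_add_self_sum_fin_six (t : Fin 6 → R) :
    (∑ i : Fin 6, C (t i) * X ^ (i : ℕ)) ^ 2 + ∑ i : Fin 6, C (t i) * X ^ (i : ℕ) =
      ∑ i : Fin 11, C (sqAddSelfCoeffs t i) * X ^ (i : ℕ) := by
  simp only [Fin.sum_univ_succ, Fin.sum_univ_zero, sqAddSelfCoeffs, Matrix.cons_val_succ,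
    Matrix.cons_val_zero, Fin.val_succ, Fin.val_zero, map_add, map_pow, map_zero]
  grind

theorem exists_sq_add_self_iff [NoZeroDivisors R] (s : Fin 11 → R) :
    (∃ T : R[X], ∑ i : Fin 11, C (s i) * X ^ (i : ℕ) = T ^ 2 + T) ↔
      ∃ t, s = sqAddSelfCoeffs t := by
  refine ⟨fun ⟨T, hT⟩ ↦ ?_, fun ⟨t, ht⟩ ↦ ⟨_, ht ▸ (sq_add_self_sum_fin_six t).symm⟩⟩
  have hS : (T ^ 2 + T).natDegree ≤ 10 := by
    rw [← hT, natDegree_le_iff_degree_le]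
    exact Order.le_of_lt_succ (degree_sum_fin_lt s)
  have hTdeg : T.degree < 6 := by
    rw [natDegree_sq_add_self] at hS
    exact degree_le_natDegree.trans_lt (by exact_mod_cast (by omega : T.natDegree < 6))
  refine ⟨fun i ↦ T.coeff i, sum_fin_C_mul_X_pow_inj.mp ?_⟩
  rw [hT, ← sq_add_self_sum_fin_six, sum_fin_C_coeff_mul_X_pow hTdeg]

theorem exists_eq_sqAddSelfCoeffs_iff (s : Fin 11 → R) :
    (∃ t, s = sqAddSelfCoeffs t) ↔
      ((∃ z : R, z ^ 2 + z + s 0 = 0) ∧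
        s 9 = 0 ∧ s 7 = 0 ∧ s 10 + (s 5) ^ 2 = 0 ∧ s 6 + (s 3) ^ 2 = 0 ∧
        s 8 + (s 4) ^ 2 + (s 2) ^ 4 + (s 1) ^ 8 = 0) := by
  constructor
  · rintro ⟨t, rfl⟩
    simp only [sqAddSelfCoeffs, Matrix.cons_val]
    exact ⟨⟨t 0, by grind⟩, by grind⟩
  · rintro ⟨⟨z, hz⟩, h9, h7, h10, h6, h8⟩
    refine ⟨![z, s 1, s 2 + s 1 ^ 2, s 3, s 4 + s 2 ^ 2 + s 1 ^ 4, s 5], funext fun i ↦ ?_⟩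
    fin_cases i <;>
      simp only [Fin.zero_eta, Fin.mk_one, Fin.reduceFinMk, Fin.isValue, sqAddSelfCoeffs,
        Matrix.cons_val_zero, Matrix.cons_val_one, Matrix.cons_val] <;>
      grind

end CharTwo

/-- Let `k` be a field of characteristic 2 and
`S = s₁₀t¹⁰ + ⋯ + s₁t + s₀ ∈ k[t]`.  There exists `T ∈ k[t]` with `S = T² + T`
if and only if `k` contains a root of `X² + X + s₀` and
`s₉ = 0`, `s₇ = 0`, `s₁₀ + s₅² = 0`, `s₆ + s₃² = 0`, `s₈ + s₄² + s₂⁴ + s₁⁸ = 0`. -/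
theorem stmt_17 (k : Type*) [Field k] [CharP k 2] (s : Fin 11 → k) :
    (∃ T : k[X], (∑ i : Fin 11, C (s i) * X ^ (i : ℕ)) = T ^ 2 + T) ↔
      ((∃ z : k, z ^ 2 + z + s 0 = 0) ∧
        s 9 = 0 ∧ s 7 = 0 ∧ s 10 + (s 5) ^ 2 = 0 ∧ s 6 + (s 3) ^ 2 = 0 ∧
        s 8 + (s 4) ^ 2 + (s 2) ^ 4 + (s 1) ^ 8 = 0) :=
  (exists_sq_add_self_iff s).trans (exists_eq_sqAddSelfCoeffs_iff s)
end

section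
/- Let k be an algebraically closed field of characteristic 2, A ∈ k nonzero, and f = A^{22} a^{60} + A^{16} a^{45} + A^{14} a^{40} + A^8 a^{25} + A^6 a^{20} + a^5 + A^2 ∈ k[a]. Then f is separable (its discriminant with respect to a is A^{1356} ≠ 0), and hence f has exactly 60 distinct roots in k, all of which are nonzero. -/
/-!
In characteristic 2 the derivative of `f` is `f' = A¹⁶a⁴⁴ + A⁸a²⁴ + a⁴`, and
`f + (A⁶a¹⁶ + a) f' = A²`. This Bézout identity with a nonzero constant gives separability, and
it also evaluates the resultant: after lowering the formal degree of `f'` from 59 to its true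
degree 44 (a factor `lc(f)¹⁵`), `Res(f', f) = Res(f', A²) = (A¹⁶)⁶⁰ (A²)⁴⁴`, so
`Res(f, f') = A³³⁰ · A⁹⁶⁰ · A⁸⁸ = A²² · A¹³⁵⁶`. A separable polynomial over an algebraically
closed field has `deg f` distinct roots, and `f(0) = A² ≠ 0`.
-/

open Polynomial

namespace Stmt19

/-- The Sylvester matrix of `f` and `g`, regarded as polynomials of degrees `m`
and `n` respectively: an `(m+n) × (m+n)` matrix whose first `n` rows contain the
shifted coefficients of `f` and whose last `m` rows contain those of `g`. -/
noncomputable def sylvester {R : Type*} [CommRing R] (m n : ℕ) (f g : R[X]) :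
    Matrix (Fin (m + n)) (Fin (m + n)) R := fun i j =>
  if (i : ℕ) < n then
    (if (i : ℕ) ≤ (j : ℕ) then f.coeff ((j : ℕ) - (i : ℕ)) else 0)
  else
    (if (i : ℕ) - n ≤ (j : ℕ) then g.coeff ((j : ℕ) - ((i : ℕ) - n)) else 0)

/-- The resultant of `f` and `g` (of formal degrees `m`, `n`): the determinant of
their Sylvester matrix. -/
noncomputable def resultant {R : Type*} [CommRing R] (m n : ℕ) (f g : R[X]) : R :=
  (sylvester m n f g).det

theorem resultant_eq_polynomial_resultant {R : Type*} [CommRing R] {m n : ℕ} {f g : R[X]}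
    (hf : f.natDegree ≤ m) (hg : g.natDegree ≤ n) :
    resultant m n f g = Polynomial.resultant g f n m := by
  rw [resultant, Polynomial.resultant, ← Matrix.det_transpose,
    ← Matrix.det_reindex_self (finCongr (add_comm n m)) (Polynomial.sylvester g f n m)]
  congr 1
  ext i j
  obtain ⟨j, rfl⟩ := (finCongr (add_comm n m)).surjective j
  simp only [Matrix.reindex_apply, Matrix.submatrix_apply, Matrix.transpose_apply,
    Equiv.symm_apply_apply, Polynomial.sylvester, Matrix.of_apply]
  induction j using Fin.addCases with
  | left j =>
    simp only [sylvester, Fin.addCases_left, finCongr_symm, finCongr_apply, Fin.val_cast,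
      Fin.val_castAdd, Set.mem_Icc, j.isLt, if_true]
    split_ifs <;> first | rfl | omega | exact coeff_eq_zero_of_natDegree_lt (by omega)
  | right j =>
    simp only [sylvester, Fin.addCases_right, finCongr_symm, finCongr_apply, Fin.val_cast,
      Fin.val_natAdd, Set.mem_Icc, add_tsub_cancel_left]
    split_ifs <;> first | rfl | omega | exact coeff_eq_zero_of_natDegree_lt (by omega)

end Stmt19

namespace Polynomial

theorem resultant_eq_of_add_mul_eq_C {R : Type*} [CommRing R] {f g p : R[X]} {r : R}
    {d m : ℕ} (k : ℕ) (hg : g.natDegree ≤ d) (hp : p.natDegree + d ≤ m) (h : f + g * p = C r) :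
    resultant g f (d + k) m =
      (-1) ^ (m * k) * f.coeff m ^ k * g.coeff d ^ m * r ^ d := by
  rw [resultant_add_left_deg _ _ _ _ _ hg, ← resultant_add_mul_right g f p d m hp hg, h,
    resultant_C_right]
  ring

theorem separable_of_add_derivative_mul_eq_C {K : Type*} [Field K] {f p : K[X]} {r : K}
    (hr : r ≠ 0) (h : f + derivative f * p = C r) : f.Separable := by
  have hC : IsCoprime (C r) (derivative f) := by
    simpa using (isCoprime_mul_unit_left_left (isUnit_C.2 hr.isUnit) 1 _).2 isCoprime_one_left
  exact IsCoprime.of_add_mul_left_left (h ▸ hC)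

theorem card_roots_toFinset_eq_natDegree {K : Type*} [Field K] [IsAlgClosed K] [DecidableEq K]
    {f : K[X]} (hf : f.Separable) : f.roots.toFinset.card = f.natDegree := by
  rw [Multiset.toFinset_card_of_nodup (nodup_roots hf),
    (IsAlgClosed.splits f).natDegree_eq_card_roots]

theorem ne_zero_of_mem_roots_of_coeff_zero_ne_zero {R : Type*} [CommRing R] [IsDomain R]
    {f : R[X]} {x : R} (h0 : f.coeff 0 ≠ 0) (hx : x ∈ f.roots) : x ≠ 0 := by
  rintro rfl
  exact h0 (coeff_zero_eq_eval_zero f ▸ isRoot_of_mem_roots hx)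

end Polynomial

namespace Stmt19

section PolyA

variable {k : Type*} [Field k] (A : k)

noncomputable def polyA : k[X] :=
  C (A ^ 22) * X ^ 60 + C (A ^ 16) * X ^ 45 + C (A ^ 14) * X ^ 40
    + C (A ^ 8) * X ^ 25 + C (A ^ 6) * X ^ 20 + X ^ 5 + C (A ^ 2)

theorem coeff_polyA_sixty : (polyA A).coeff 60 = A ^ 22 := by
  simp only [polyA, coeff_add, coeff_C_mul, coeff_X_pow, coeff_C]
  norm_num

theorem coeff_polyA_zero : (polyA A).coeff 0 = A ^ 2 := by
  simp only [polyA, coeff_add, coeff_C_mul, coeff_X_pow, coeff_C]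
  norm_num

theorem natDegree_polyA (hA : A ≠ 0) : (polyA A).natDegree = 60 :=
  natDegree_eq_of_le_of_coeff_ne_zero (by unfold polyA; compute_degree)
    (by rw [coeff_polyA_sixty]; exact pow_ne_zero _ hA)

theorem leadingCoeff_polyA (hA : A ≠ 0) : (polyA A).leadingCoeff = A ^ 22 := by
  rw [leadingCoeff, natDegree_polyA A hA, coeff_polyA_sixty]

variable [CharP k 2]

theorem derivative_polyA :
    derivative (polyA A) = C (A ^ 16) * X ^ 44 + C (A ^ 8) * X ^ 24 + X ^ 4 := by
  simp only [polyA, derivative_add, derivative_C_mul_X_pow, derivative_X_pow, derivative_C]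
  simp [CharTwo.ofNat_eq_mod]

theorem natDegree_derivative_polyA_le : (derivative (polyA A)).natDegree ≤ 44 := by
  rw [derivative_polyA]; compute_degree

theorem coeff_derivative_polyA : (derivative (polyA A)).coeff 44 = A ^ 16 := by
  simp only [derivative_polyA, coeff_add, coeff_C_mul, coeff_X_pow]
  norm_num

theorem polyA_add_derivative_mul :
    polyA A + derivative (polyA A) * (C (A ^ 6) * X ^ 16 + X) = C (A ^ 2) := by
  rw [derivative_polyA, polyA]
  simp only [C_pow]
  linear_combination (C A ^ 22 * X ^ 60 + C A ^ 16 * X ^ 45 + C A ^ 14 * X ^ 40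
      + C A ^ 8 * X ^ 25 + C A ^ 6 * X ^ 20 + X ^ 5) * CharTwo.two_eq_zero (R := k[X])

end PolyA

-- `Disc(f) = A¹³⁵⁶` is encoded as `Res(f, f') = lc(f) · A¹³⁵⁶` (no sign in characteristic 2).
/-- Let `k` be algebraically closed of characteristic 2, `A ∈ k` nonzero, and
`f = A²²a⁶⁰ + A¹⁶a⁴⁵ + A¹⁴a⁴⁰ + A⁸a²⁵ + A⁶a²⁰ + a⁵ + A² ∈ k[a]`.  Then the
discriminant of `f` with respect to `a` equals `A¹³⁵⁶ ≠ 0` — expressed below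
(avoiding division, and noting that in characteristic 2 the sign in
`Res(f, f') = ± lc(f)·Disc(f)` is irrelevant) as
`Res(f, f') = lc(f) · A¹³⁵⁶` — so `f` is separable and has exactly 60 distinct
roots in `k`, all of which are nonzero. -/
theorem stmt_19 (k : Type*) [Field k] [IsAlgClosed k] [CharP k 2] [DecidableEq k]
    (A : k) (hA : A ≠ 0) :
    let f : k[X] := C (A ^ 22) * X ^ 60 + C (A ^ 16) * X ^ 45 + C (A ^ 14) * X ^ 40
      + C (A ^ 8) * X ^ 25 + C (A ^ 6) * X ^ 20 + X ^ 5 + C (A ^ 2)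
    resultant 60 59 f (derivative f) = f.leadingCoeff * A ^ 1356 ∧
    (A : k) ^ 1356 ≠ 0 ∧
    f.Separable ∧ f.roots.toFinset.card = 60 ∧ ∀ x ∈ f.roots, x ≠ 0 := by
  show resultant 60 59 (polyA A) (derivative (polyA A)) = (polyA A).leadingCoeff * A ^ 1356 ∧
    A ^ 1356 ≠ 0 ∧ (polyA A).Separable ∧ (polyA A).roots.toFinset.card = 60 ∧
    ∀ x ∈ (polyA A).roots, x ≠ 0
  have hsep : (polyA A).Separable :=
    separable_of_add_derivative_mul_eq_C (pow_ne_zero 2 hA) (polyA_add_derivative_mul A)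
  refine ⟨?_, pow_ne_zero _ hA, hsep, ?_, fun x ↦ ne_zero_of_mem_roots_of_coeff_zero_ne_zero ?_⟩
  · rw [resultant_eq_polynomial_resultant (natDegree_polyA A hA).le
      ((natDegree_derivative_polyA_le A).trans (by norm_num)),
      show 59 = 44 + 15 from rfl,
      resultant_eq_of_add_mul_eq_C 15 (natDegree_derivative_polyA_le A) (by
        have : (C (A ^ 6) * X ^ 16 + X : k[X]).natDegree ≤ 16 := by compute_degree
        omega)
        (polyA_add_derivative_mul A),
      coeff_polyA_sixty, coeff_derivative_polyA, leadingCoeff_polyA A hA]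
    ring
  · rw [card_roots_toFinset_eq_natDegree hsep, natDegree_polyA A hA]
  · rw [coeff_polyA_zero]; exact pow_ne_zero 2 hA

end Stmt19
end
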